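/- arXiv:1310.7334 — 3 statements merged into one kernel-verified Lean document; each statement's English description precedes it below -/
import Mathlib

section
/- Given a Weylian metric, represented by a pseudo-Riemannian metric g and a 1-form φ, there is exactly one torsion-free affine connection ∇ satisfying the compatibility condition ∇g + 2 φ ⊗ g = 0 (Weyl's fundamental theorem of infinitesimal geometry). -/
/-- The (Weyl-modified) Koszul expression: `2 g(D_X Y, Z)` should equal this. -/
private def Kos {C V : Type*} [CommRing C] (act : V → C → C) (br : V → V → V)
    (g : V → V → C) (φ : V → C) (X Y Z : V) : C :=
  act X (g Y Z) + act Y (g X Z) - act Z (g X Y)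
    + g (br X Y) Z - g (br X Z) Y - g (br Y Z) X
    + 2 * φ X * g Y Z + 2 * φ Y * g X Z - 2 * φ Z * g X Y

/-- **Weyl's fundamental theorem of infinitesimal geometry.**  Given a Weylian metric
represented by a pseudo-Riemannian metric `g` and a 1-form `φ`, there is exactly one
torsion-free affine connection `D` satisfying `∇g + 2 φ ⊗ g = 0`, i.e.
`X⟨g(Y,Z)⟩ = g(D_X Y, Z) + g(Y, D_X Z) − 2 φ(X) g(Y,Z)`.
The setting is modelled algebraically: `C` is the commutative ℝ-algebra of smooth
functions, `V` the `C`-module of vector fields, `act X f` the derivation action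
`X⟨f⟩`, `bracket` the Lie bracket, `g` a symmetric non-degenerate `C`-bilinear form,
and `φ` a `C`-linear form on vector fields (the 1-form). -/
theorem weyl_fundamental_theorem
    (C V : Type*) [CommRing C] [Algebra ℝ C] [AddCommGroup V] [Module C V]
    (act : V → C → C)
    (hact_addf : ∀ X f₁ f₂, act X (f₁ + f₂) = act X f₁ + act X f₂)
    (hact_leib : ∀ X f₁ f₂, act X (f₁ * f₂) = f₁ * act X f₂ + f₂ * act X f₁)
    (hact_addX : ∀ X Y f, act (X + Y) f = act X f + act Y f)
    (hact_smulX : ∀ (f : C) X h, act (f • X) h = f * act X h)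
    (bracket : V → V → V)
    (hbr_antisymm : ∀ X Y, bracket X Y = - bracket Y X)
    (hbr_addl : ∀ X Y Z, bracket (X + Y) Z = bracket X Z + bracket Y Z)
    (hbr_smull : ∀ (f : C) X Y, bracket (f • X) Y = f • bracket X Y - act Y f • X)
    (hbr_act : ∀ X Y f, act (bracket X Y) f = act X (act Y f) - act Y (act X f))
    (g : V → V → C)
    (hg_symm : ∀ X Y, g X Y = g Y X)
    (hg_addl : ∀ X Y Z, g (X + Y) Z = g X Z + g Y Z)
    (hg_smull : ∀ (f : C) X Y, g (f • X) Y = f * g X Y)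
    (hg_nondeg : ∀ ω : V → C, (∀ X Y, ω (X + Y) = ω X + ω Y) →
      (∀ (f : C) X, ω (f • X) = f * ω X) → ∃! W : V, ∀ Z, g W Z = ω Z)
    (φ : V → C)
    (hφ_add : ∀ X Y, φ (X + Y) = φ X + φ Y)
    (hφ_smul : ∀ (f : C) X, φ (f • X) = f * φ X) :
    ∃! D : V → V → V,
      -- `D` is an affine connection:
      (∀ X Y Z, D (X + Y) Z = D X Z + D Y Z) ∧
      (∀ (f : C) X Z, D (f • X) Z = f • D X Z) ∧
      (∀ X Y Z, D X (Y + Z) = D X Y + D X Z) ∧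
      (∀ (f : C) X Y, D X (f • Y) = f • D X Y + act X f • Y) ∧
      -- torsion-free:
      (∀ X Y, D X Y - D Y X = bracket X Y) ∧
      -- compatible with the Weylian metric (`∇g + 2 φ ⊗ g = 0`):
      (∀ X Y Z, act X (g Y Z) = g (D X Y) Z + g Y (D X Z) - 2 * φ X * g Y Z) := by
  classical
  -- derived bilinearity facts
  have hg_addr : ∀ X Y Z : V, g X (Y + Z) = g X Y + g X Z := fun X Y Z => by
    rw [hg_symm, hg_addl, hg_symm Y X, hg_symm Z X]
  have hg_smulr : ∀ (f : C) (X Y : V), g X (f • Y) = f * g X Y := fun f X Y => by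
    rw [hg_symm, hg_smull, hg_symm]
  have hg_negl : ∀ X Z : V, g (-X) Z = - g X Z := fun X Z => by
    have h := hg_smull (-1) X Z
    simpa using h
  have hg_subl : ∀ X Y Z : V, g (X - Y) Z = g X Z - g Y Z := fun X Y Z => by
    rw [sub_eq_add_neg, hg_addl, hg_negl, sub_eq_add_neg]
  have hbr_smulr : ∀ (f : C) (X Y : V),
      bracket X (f • Y) = f • bracket X Y + act X f • Y := fun f X Y => by
    rw [hbr_antisymm X (f • Y), hbr_smull, hbr_antisymm Y X]
    module
  have hbr_addr : ∀ X Y Z : V, bracket X (Y + Z) = bracket X Y + bracket X Z :=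
    fun X Y Z => by
      rw [hbr_antisymm X (Y + Z), hbr_addl, hbr_antisymm Y X, hbr_antisymm Z X]
      module
  -- injectivity from nondegeneracy
  have hg_inj : ∀ W W' : V, (∀ Z, g W Z = g W' Z) → W = W' := by
    intro W W' h
    obtain ⟨U, -, hU⟩ := hg_nondeg (fun Z => g W' Z)
      (fun X Y => hg_addr W' X Y) (fun f X => hg_smulr f W' X)
    have h1 : W = U := hU W h
    have h2 : W' = U := hU W' (fun _ => rfl)
    rw [h1, h2]
  -- the half element
  set h2 : C := algebraMap ℝ C (2⁻¹) with hh2def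
  have hh : (2 : C) * h2 = 1 := by
    rw [hh2def, show (2 : C) = algebraMap ℝ C 2 from (map_ofNat (algebraMap ℝ C) 2).symm, ← map_mul]
    norm_num
  -- Koszul identities
  have hK_addZ : ∀ X Y Z Z' : V,
      Kos act bracket g φ X Y (Z + Z')
        = Kos act bracket g φ X Y Z + Kos act bracket g φ X Y Z' := by
    intro X Y Z Z'
    simp only [Kos, hg_addr, hg_addl, hact_addf, hact_addX, hbr_addr, hφ_add]
    ring
  have hK_smulZ : ∀ (f : C) (X Y Z : V),
      Kos act bracket g φ X Y (f • Z) = f * Kos act bracket g φ X Y Z := by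
    intro f X Y Z
    simp only [Kos, hg_smulr, hact_leib, hact_smulX, hbr_smulr, hg_addl, hg_smull,
      hφ_smul]
    rw [hg_symm Z Y, hg_symm Z X]
    ring
  have hexist : ∀ X Y : V, ∃! W : V, ∀ Z, g W Z = h2 * Kos act bracket g φ X Y Z := by
    intro X Y
    refine hg_nondeg _ (fun Z Z' => by rw [hK_addZ]; ring)
      (fun f Z => by rw [hK_smulZ]; ring)
  choose D hD hDuniq using fun X Y => hexist X Y
  -- Koszul identities for the other slots
  have hK_addX : ∀ X X' Y Z : V,
      Kos act bracket g φ (X + X') Y Z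
        = Kos act bracket g φ X Y Z + Kos act bracket g φ X' Y Z := by
    intro X X' Y Z
    simp only [Kos, hg_addl, hg_addr, hact_addf, hact_addX, hbr_addl, hbr_addr, hφ_add]
    ring
  have hK_smulX : ∀ (f : C) (X Y Z : V),
      Kos act bracket g φ (f • X) Y Z = f * Kos act bracket g φ X Y Z := by
    intro f X Y Z
    simp only [Kos, hg_smull, hg_smulr, hact_leib, hact_smulX, hbr_smull, hg_subl,
      hφ_smul]
    ring
  have hK_addY : ∀ X Y Y' Z : V,
      Kos act bracket g φ X (Y + Y') Z
        = Kos act bracket g φ X Y Z + Kos act bracket g φ X Y' Z := by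
    intro X Y Y' Z
    simp only [Kos, hg_addl, hg_addr, hact_addf, hact_addX, hbr_addl, hbr_addr, hφ_add]
    ring
  have hK_smulY : ∀ (f : C) (X Y Z : V),
      Kos act bracket g φ X (f • Y) Z
        = f * Kos act bracket g φ X Y Z + 2 * act X f * g Y Z := by
    intro f X Y Z
    simp only [Kos, hg_smull, hg_smulr, hact_leib, hact_smulX, hbr_smull, hbr_smulr,
      hg_addl, hg_subl, hφ_smul]
    rw [hg_symm Y X]
    ring
  have hK_tor : ∀ X Y Z : V,
      Kos act bracket g φ X Y Z - Kos act bracket g φ Y X Z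
        = 2 * g (bracket X Y) Z := by
    intro X Y Z
    simp only [Kos]
    rw [hbr_antisymm Y X, hg_negl, hg_symm Y X]
    ring
  have hK_compat : ∀ X Y Z : V,
      Kos act bracket g φ X Y Z + Kos act bracket g φ X Z Y
        = 2 * act X (g Y Z) + 4 * φ X * g Y Z := by
    intro X Y Z
    simp only [Kos]
    rw [hg_symm Z Y, hbr_antisymm Z Y, hg_negl]
    ring
  refine ⟨D, ⟨?_, ?_, ?_, ?_, ?_, ?_⟩, ?_⟩
  · intro X Y Z
    refine hg_inj _ _ fun W => ?_
    rw [hD, hg_addl, hD, hD, hK_addX]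
    ring
  · intro f X Z
    refine hg_inj _ _ fun W => ?_
    rw [hD, hg_smull, hD, hK_smulX]
    ring
  · intro X Y Z
    refine hg_inj _ _ fun W => ?_
    rw [hD, hg_addl, hD, hD, hK_addY]
    ring
  · intro f X Y
    refine hg_inj _ _ fun W => ?_
    rw [hD, hg_addl, hg_smull, hg_smull, hD, hK_smulY]
    linear_combination act X f * g Y W * hh
  · intro X Y
    refine hg_inj _ _ fun W => ?_
    rw [hg_subl, hD, hD]
    have := hK_tor X Y W
    linear_combination h2 * this + g (bracket X Y) W * hh
  · intro X Y Z
    rw [hg_symm Y (D X Z), hD, hD]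
    have := hK_compat X Y Z
    linear_combination (-h2) * this - (act X (g Y Z) + 2 * φ X * g Y Z) * hh
  · -- uniqueness
    rintro D' ⟨-, -, -, -, ht, hc⟩
    funext X Y
    symm
    refine hg_inj _ _ fun Z => ?_
    rw [hD]
    have A := hc X Y Z
    have B := hc Y X Z
    have Cc := hc Z X Y
    have t1 : g (D' X Y) Z - g (D' Y X) Z = g (bracket X Y) Z := by
      rw [← hg_subl, ht X Y]
    have t2 : g (D' X Z) Y - g (D' Z X) Y = g (bracket X Z) Y := by
      rw [← hg_subl, ht X Z]
    have t3 : g (D' Y Z) X - g (D' Z Y) X = g (bracket Y Z) X := by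
      rw [← hg_subl, ht Y Z]
    have s1 := hg_symm Y (D' X Z)
    have s2 := hg_symm X (D' Y Z)
    have s3 := hg_symm X (D' Z Y)
    have key : Kos act bracket g φ X Y Z = 2 * g (D' X Y) Z := by
      simp only [Kos]
      linear_combination A + B - Cc - t1 + t2 + t3 + s1 + s2 - s3
    linear_combination h2 * key + g (D' X Y) Z * hh
end

section
/- The normalizer of SO(n, ℝ) in GL(n, ℝ) for n ≥ 3 is the group of similarity transformations ℝ^× · O(n, ℝ) = {λ Q : λ ∈ ℝ, λ ≠ 0, Q ∈ O(n, ℝ)}. -/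
open Matrix

lemma aux_scalar_of_comm {n : ℕ} (hn : 3 ≤ n) (B : Matrix (Fin n) (Fin n) ℝ)
    (hB : ∀ R : Matrix (Fin n) (Fin n) ℝ, Rᵀ * R = 1 → R.det = 1 → B * R = R * B) :
    ∃ c : ℝ, B = c • 1 := by
  have hcard : ∀ (i l : Fin n), ∃ j : Fin n, j ≠ i ∧ j ≠ l := by
    intro i l
    have h2 : ({i, l} : Finset (Fin n)).card < (Finset.univ : Finset (Fin n)).card := by
      have h3 : ({i, l} : Finset (Fin n)).card ≤ 2 := by
        have := Finset.card_insert_le i ({l} : Finset (Fin n))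
        simpa using this
      have : (2:ℕ) < (Finset.univ : Finset (Fin n)).card := by
        simp [Finset.card_univ]; omega
      omega
    have hne : ({i, l} : Finset (Fin n)) ≠ Finset.univ := fun h => by
      rw [h] at h2; exact lt_irrefl _ h2
    obtain ⟨j, -, hj⟩ :=
      Finset.exists_of_ssubset (ssubset_of_subset_of_ne (Finset.subset_univ _) hne)
    refine ⟨j, fun h => hj (by simp [h]), fun h => hj (by simp [h])⟩
  -- off-diagonal entries vanish
  have off : ∀ i l : Fin n, i ≠ l → B i l = 0 := by
    intro i l hil
    obtain ⟨j, hji, hjl⟩ := hcard i l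
    set d : Fin n → ℝ := fun a => (if a = i then -1 else 1) * (if a = j then -1 else 1) with hd
    have hdsq : ∀ a, d a * d a = 1 := by
      intro a; simp only [hd]; split_ifs <;> norm_num
    have hortho : (diagonal d)ᵀ * diagonal d = 1 := by
      rw [diagonal_transpose, diagonal_mul_diagonal, ← diagonal_one]
      exact congrArg _ (funext hdsq)
    have hdet : (diagonal d).det = 1 := by
      rw [det_diagonal]
      simp only [hd]
      rw [Finset.prod_mul_distrib,
        Finset.prod_ite_eq' Finset.univ i (fun _ => (-1:ℝ)),
        Finset.prod_ite_eq' Finset.univ j (fun _ => (-1:ℝ))]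
      norm_num
    have hc := hB (diagonal d) hortho hdet
    have h1 : (B * diagonal d) i l = (diagonal d * B) i l := by rw [hc]
    rw [mul_diagonal, diagonal_mul] at h1
    have hdl : d l = 1 := by simp [hd, Ne.symm hil, Ne.symm hjl]
    have hdi : d i = -1 := by simp [hd, Ne.symm hji]
    rw [hdl, hdi] at h1
    linarith
  -- diagonal entries all equal
  have diag : ∀ i j : Fin n, B i i = B j j := by
    intro i j
    by_cases hij : i = j
    · rw [hij]
    obtain ⟨k, hki, hkj⟩ := hcard i j
    set σ : Equiv.Perm (Fin n) := Equiv.swap i j with hσ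
    set d : Fin n → ℝ := fun a => if a = k then -1 else 1 with hd
    set S : Matrix (Fin n) (Fin n) ℝ := σ.toPEquiv.toMatrix * diagonal d with hS
    have hPs : ∀ M : Matrix (Fin n) (Fin n) ℝ,
        (σ.toPEquiv.toMatrix : Matrix (Fin n) (Fin n) ℝ)ᵀ * (σ.toPEquiv.toMatrix * M) = M := by
      intro M
      rw [← mul_assoc, ← PEquiv.toMatrix_symm, ← Equiv.toPEquiv_symm,
        ← PEquiv.toMatrix_trans, ← Equiv.toPEquiv_trans]
      simp
    have hortho : Sᵀ * S = 1 := by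
      rw [hS, transpose_mul, diagonal_transpose, mul_assoc, hPs,
        diagonal_mul_diagonal, ← diagonal_one]
      refine congrArg _ (funext fun a => ?_)
      simp only [hd]; split_ifs <;> norm_num
    have hdet : S.det = 1 := by
      rw [hS, det_mul, det_diagonal]
      have h1 : (σ.toPEquiv.toMatrix : Matrix (Fin n) (Fin n) ℝ).det = -1 := by
        have := Matrix.det_permutation (R := ℝ) σ
        rw [Equiv.Perm.sign_swap hij] at this
        simpa [Equiv.Perm.permMatrix] using this
      have h2 : (∏ a, d a) = -1 := by
        simp only [hd]
        rw [Finset.prod_ite_eq' Finset.univ k (fun _ => (-1:ℝ))]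
        simp
      rw [h1, h2]; norm_num
    have hc := hB S hortho hdet
    have h1 : (B * S) j i = (S * B) j i := by rw [hc]
    have lhs : (B * S) j i = B j j := by
      rw [hS, ← mul_assoc, PEquiv.mul_toMatrix_toPEquiv, mul_diagonal,
        submatrix_apply, id_eq, Equiv.symm_swap, Equiv.swap_apply_left]
      have : d i = 1 := by simp [hd, Ne.symm hki]
      rw [this, mul_one]
    have rhs : (S * B) j i = B i i := by
      rw [hS, mul_assoc, PEquiv.toMatrix_toPEquiv_mul, submatrix_apply, id_eq,
        Equiv.swap_apply_right, diagonal_mul]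
      have : d i = 1 := by simp [hd, Ne.symm hki]
      rw [this, one_mul]
    rw [lhs, rhs] at h1
    exact h1.symm
  -- conclude
  have hn0 : 0 < n := by omega
  refine ⟨B ⟨0, hn0⟩ ⟨0, hn0⟩, ?_⟩
  ext a b
  by_cases hab : a = b
  · subst hab
    rw [diag a ⟨0, hn0⟩]
    simp [Matrix.one_apply_eq]
  · rw [off a b hab]
    simp [Matrix.one_apply_ne hab]
/-- **The normalizer of `SO(n,ℝ)` in `GL(n,ℝ)` (`n ≥ 3`) is the similarity group
`ℝ^× · O(n,ℝ)`.**  An invertible matrix `P` normalizes `SO(n) = {Q : QᵀQ = 1, det Q = 1}`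
(i.e. `P⁻¹ SO(n) P = SO(n)`) if and only if `P = λ Q` for some `λ ≠ 0` and `Q ∈ O(n)`. -/
theorem normalizer_SO_eq_similarities {n : ℕ} (hn : 3 ≤ n)
    (P : (Matrix (Fin n) (Fin n) ℝ)ˣ) :
    (∀ Q : Matrix (Fin n) (Fin n) ℝ,
        (Qᵀ * Q = 1 ∧ Q.det = 1) ↔
        ((((P⁻¹).val * Q * P.val)ᵀ * ((P⁻¹).val * Q * P.val) = 1) ∧
          ((P⁻¹).val * Q * P.val).det = 1)) ↔
      ∃ (l : ℝ) (Q : Matrix (Fin n) (Fin n) ℝ),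
        l ≠ 0 ∧ Qᵀ * Q = 1 ∧ P.val = l • Q := by
  have hn0 : 0 < n := by omega
  have hip : ((P⁻¹).val : Matrix (Fin n) (Fin n) ℝ) * P.val = 1 := by
    rw [← Units.val_mul]; simp
  have hpi : (P.val : Matrix (Fin n) (Fin n) ℝ) * (P⁻¹).val = 1 := by
    rw [← Units.val_mul]; simp
  constructor
  · intro h
    set B : Matrix (Fin n) (Fin n) ℝ := ((P⁻¹).val)ᵀ * (P⁻¹).val with hBdef
    have hPB : (P.val)ᵀ * B * P.val = 1 := by
      have : (P.val)ᵀ * (((P⁻¹).val)ᵀ * (P⁻¹).val) * P.val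
          = ((P⁻¹).val * P.val)ᵀ * ((P⁻¹).val * P.val) := by
        rw [transpose_mul]; simp [mul_assoc]
      rw [hBdef, this, hip]; simp
    have hit : ((P⁻¹).val)ᵀ * (P.val)ᵀ = 1 := by
      rw [← transpose_mul, hpi, transpose_one]
    have cancel : ∀ X Y : Matrix (Fin n) (Fin n) ℝ,
        (P.val)ᵀ * X * P.val = (P.val)ᵀ * Y * P.val → X = Y := by
      intro X Y hXY
      calc X = (((P⁻¹).val)ᵀ * (P.val)ᵀ) * X * (P.val * (P⁻¹).val) := by
            rw [hit, hpi, one_mul, mul_one]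
        _ = ((P⁻¹).val)ᵀ * ((P.val)ᵀ * X * P.val) * (P⁻¹).val := by
            simp only [mul_assoc]
        _ = ((P⁻¹).val)ᵀ * ((P.val)ᵀ * Y * P.val) * (P⁻¹).val := by rw [hXY]
        _ = (((P⁻¹).val)ᵀ * (P.val)ᵀ) * Y * (P.val * (P⁻¹).val) := by
            simp only [mul_assoc]
        _ = Y := by rw [hit, hpi, one_mul, mul_one]
    have hcomm : ∀ R : Matrix (Fin n) (Fin n) ℝ, Rᵀ * R = 1 → R.det = 1 → B * R = R * B := by
      intro R hR1 hR2
      obtain ⟨h1, -⟩ := (h R).mp ⟨hR1, hR2⟩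
      have e1 : (P.val)ᵀ * (Rᵀ * B * R) * P.val = (P.val)ᵀ * B * P.val := by
        rw [hPB, ← h1, hBdef]
        simp only [transpose_mul, mul_assoc]
      have key : Rᵀ * B * R = B := cancel _ _ e1
      have hRR : R * Rᵀ = 1 := mul_eq_one_comm.mp hR1
      calc B * R = (R * Rᵀ) * B * R := by rw [hRR, one_mul]
        _ = R * (Rᵀ * B * R) := by simp [mul_assoc]
        _ = R * B := by rw [key]
    obtain ⟨c, hc⟩ := aux_scalar_of_comm hn B hcomm
    have h1c : c • ((P.val)ᵀ * P.val) = 1 := by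
      have h2 := hPB
      rw [hc] at h2
      calc c • ((P.val)ᵀ * P.val)
          = (P.val)ᵀ * (c • (1:Matrix (Fin n) (Fin n) ℝ)) * P.val := by
            rw [mul_smul_comm, smul_mul_assoc, mul_one]
        _ = 1 := h2
    set i0 : Fin n := ⟨0, hn0⟩ with hi0
    have hc0 : c ≠ 0 := by
      intro h0
      have := congrFun (congrFun h1c i0) i0
      rw [h0, zero_smul] at this
      simp [Matrix.one_apply_eq] at this
    have hPtP : (P.val)ᵀ * P.val = c⁻¹ • 1 := by
      have := congrArg (fun M => c⁻¹ • M) h1c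
      simpa [smul_smul, inv_mul_cancel₀ hc0] using this
    have hentry : ((P.val)ᵀ * P.val) i0 i0 = c⁻¹ := by
      rw [hPtP]; simp [Matrix.one_apply_eq]
    have hpos : 0 < c⁻¹ := by
      have hge : 0 ≤ ((P.val)ᵀ * P.val) i0 i0 := by
        rw [mul_apply]
        exact Finset.sum_nonneg fun a _ => by
          rw [transpose_apply]; exact mul_self_nonneg _
      rw [hentry] at hge
      exact lt_of_le_of_ne hge (by simpa using (inv_ne_zero hc0).symm)
    set l : ℝ := Real.sqrt c⁻¹ with hl
    have hl0 : l ≠ 0 := ne_of_gt (Real.sqrt_pos.mpr hpos)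
    have hlsq : l * l = c⁻¹ := Real.mul_self_sqrt (le_of_lt hpos)
    refine ⟨l, l⁻¹ • P.val, hl0, ?_, ?_⟩
    · rw [transpose_smul, smul_mul_smul_comm, hPtP, smul_smul]
      have hone : l⁻¹ * l⁻¹ * c⁻¹ = 1 := by
        rw [← mul_inv, hlsq, inv_inv, mul_inv_cancel₀ hc0]
      rw [hone, one_smul]
    · rw [smul_smul, mul_inv_cancel₀ hl0, one_smul]
  · rintro ⟨l, Q, hl, hQ, hPQ⟩ R
    have hQQ : Q * Qᵀ = 1 := mul_eq_one_comm.mp hQ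
    have hPinv : ((P⁻¹).val : Matrix (Fin n) (Fin n) ℝ) = l⁻¹ • Qᵀ := by
      rw [Matrix.coe_units_inv, hPQ]
      apply Matrix.inv_eq_left_inv
      rw [smul_mul_smul_comm, inv_mul_cancel₀ hl, hQ, one_smul]
    have hconj : (P⁻¹).val * R * P.val = Qᵀ * R * Q := by
      rw [hPinv, hPQ, smul_mul_assoc, smul_mul_assoc, mul_smul_comm, smul_smul,
        inv_mul_cancel₀ hl, one_smul]
    rw [hconj]
    have hdetQ : Q.det * Q.det = 1 := by
      have := congrArg Matrix.det hQ
      rwa [det_mul, det_transpose, det_one] at this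
    have expand : (Qᵀ * R * Q)ᵀ * (Qᵀ * R * Q) = Qᵀ * (Rᵀ * R) * Q := by
      calc (Qᵀ * R * Q)ᵀ * (Qᵀ * R * Q)
          = Qᵀ * (Rᵀ * ((Q * Qᵀ) * (R * Q))) := by
            simp only [transpose_mul, transpose_transpose, mul_assoc]
        _ = Qᵀ * (Rᵀ * R) * Q := by rw [hQQ, one_mul]; simp only [mul_assoc]
    have hdetM : (Qᵀ * R * Q).det = R.det := by
      rw [det_mul, det_mul, det_transpose]
      calc Q.det * R.det * Q.det = R.det * (Q.det * Q.det) := by ring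
        _ = R.det := by rw [hdetQ, mul_one]
    constructor
    · rintro ⟨hR1, hR2⟩
      refine ⟨?_, by rw [hdetM]; exact hR2⟩
      rw [expand, hR1, mul_one, hQ]
    · rintro ⟨hR1, hR2⟩
      rw [expand] at hR1
      refine ⟨?_, by rw [← hdetM]; exact hR2⟩
      have := congrArg (fun M => Q * M * Qᵀ) hR1
      calc Rᵀ * R = (Q * Qᵀ) * (Rᵀ * R) * (Q * Qᵀ) := by rw [hQQ, one_mul, mul_one]
        _ = Q * (Qᵀ * (Rᵀ * R) * Q) * Qᵀ := by simp only [mul_assoc]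
        _ = Q * 1 * Qᵀ := this
        _ = 1 := by rw [mul_one, hQQ]
end

section
/- If P ∈ GL(n, ℝ) normalizes SO(n, ℝ) (n ≥ 3), then conjugation by P preserves the standard inner product up to a positive scalar: there exists c > 0 with ⟨Px, Py⟩ = c ⟨x, y⟩ for all x, y ∈ ℝⁿ. -/
/-!
Since `P Q P⁻¹ ∈ SO(n)` whenever `Q ∈ SO(n)`, the Gram matrix `M = PᵀP` satisfies
`QᵀMQ = M` for every `Q ∈ SO(n)`. For `n ≥ 3` such an `M` is scalar: conjugating by the sign
change of two coordinates `i, j` negates `M i k` for every third index `k`, and conjugating by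
the permutation matrix of a 3-cycle moves any diagonal entry to any other. The scalar is positive
because `M` is the Gram matrix of an invertible matrix.
-/

open Matrix Equiv

lemma Fintype.exists_ne_ne_of_three_le_card {ι : Type*} [Fintype ι] (h3 : 3 ≤ Fintype.card ι)
    (i j : ι) : ∃ k, k ≠ i ∧ k ≠ j :=
  ENat.exists_ne_ne_of_three_le (by simpa [ENat.card_eq_coe_fintype_card]) i j

namespace Matrix

variable {ι R : Type*} [Fintype ι] [CommRing R]

lemma mulVec_dotProduct_mulVec (A : Matrix ι ι R) (x y : ι → R) :
    A *ᵥ x ⬝ᵥ A *ᵥ y = x ⬝ᵥ (Aᵀ * A) *ᵥ y := by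
  rw [dotProduct_mulVec, dotProduct_mulVec, vecMul_mulVec]

variable [DecidableEq ι]

lemma transpose_permMatrix_mul_mul_permMatrix (σ : Perm ι) (M : Matrix ι ι R) :
    (σ.permMatrix R)ᵀ * M * σ.permMatrix R = M.submatrix σ.symm σ.symm := by
  simp [PEquiv.toMatrix_toPEquiv_mul, PEquiv.mul_toMatrix_toPEquiv]

lemma transpose_permMatrix_mul_permMatrix (σ : Perm ι) :
    (σ.permMatrix R)ᵀ * σ.permMatrix R = 1 := by
  simpa using transpose_permMatrix_mul_mul_permMatrix σ (1 : Matrix ι ι R)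

lemma transpose_diagonal_mul_mul_diagonal_apply (d : ι → R) (M : Matrix ι ι R) (i j : ι) :
    ((diagonal d)ᵀ * M * diagonal d) i j = d i * M i j * d j := by
  simp [diagonal_transpose, mul_diagonal, diagonal_mul]

lemma transpose_mul_gram_mul_of_conj_orthogonal (P : (Matrix ι ι R)ˣ) {Q : Matrix ι ι R}
    (h : (P.val * Q * P⁻¹.val)ᵀ * (P.val * Q * P⁻¹.val) = 1) :
    Qᵀ * (P.valᵀ * P.val) * Q = P.valᵀ * P.val := by
  have hPt : P.valᵀ * P⁻¹.valᵀ = 1 := by rw [← transpose_mul, P.inv_mul, transpose_one]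
  calc Qᵀ * (P.valᵀ * P.val) * Q
      = P.valᵀ * ((P.val * Q * P⁻¹.val)ᵀ * (P.val * Q * P⁻¹.val)) * P.val := by
        simp only [transpose_mul, Matrix.mul_assoc, P.inv_mul, Matrix.mul_one]
        simp only [← Matrix.mul_assoc, hPt, Matrix.one_mul]
    _ = P.valᵀ * P.val := by rw [h, Matrix.mul_one]

section SOInvariant

variable {M : Matrix ι ι R}

lemma apply_eq_zero_of_forall_SO_conj [NoZeroDivisors R] [CharZero R]
    (h3 : 3 ≤ Fintype.card ι)
    (hM : ∀ Q : Matrix ι ι R, Qᵀ * Q = 1 → Q.det = 1 → Qᵀ * M * Q = M)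
    {i k : ι} (hik : i ≠ k) : M i k = 0 := by
  obtain ⟨j, hji, hjk⟩ := Fintype.exists_ne_ne_of_three_le_card h3 i k
  set s : ι → R := Function.update (Function.update 1 i (-1)) j (-1) with hs
  have hss : (diagonal s)ᵀ * diagonal s = 1 := by
    rw [diagonal_transpose, diagonal_mul_diagonal, ← diagonal_one]
    congr 1
    ext l
    simp only [hs, Function.update_apply]
    split_ifs <;> simp
  have hdet : (diagonal s).det = 1 := by
    rw [det_diagonal, hs, Finset.prod_update_of_mem (Finset.mem_univ _),
      Finset.prod_update_of_mem (by simpa using hji.symm)]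
    simp
  have hflip := congr_fun₂ (hM _ hss hdet) i k
  rw [transpose_diagonal_mul_mul_diagonal_apply] at hflip
  simp [hs, hji.symm, hik.symm, hjk.symm] at hflip
  exact CharZero.neg_eq_self_iff.mp hflip

lemma apply_self_eq_of_forall_SO_conj (h3 : 3 ≤ Fintype.card ι)
    (hM : ∀ Q : Matrix ι ι R, Qᵀ * Q = 1 → Q.det = 1 → Qᵀ * M * Q = M)
    (i j : ι) : M i i = M j j := by
  rcases eq_or_ne i j with rfl | hij
  · rfl
  obtain ⟨k, hki, hkj⟩ := Fintype.exists_ne_ne_of_three_le_card h3 i j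
  set σ : Perm ι := Equiv.swap i j * Equiv.swap j k
  have hσ : σ.symm j = i := by
    rw [symm_apply_eq]
    simp [σ, swap_apply_of_ne_of_ne hij hki.symm]
  have hsign : Perm.sign σ = 1 := by
    simp [σ, Perm.sign_mul, Perm.sign_swap hij, Perm.sign_swap hkj.symm]
  have hcycle := congr_fun₂ (hM _ (transpose_permMatrix_mul_permMatrix σ) (by simp [hsign])) j j
  rwa [transpose_permMatrix_mul_mul_permMatrix, submatrix_apply, hσ] at hcycle

lemma exists_eq_scalar_of_forall_SO_conj [NoZeroDivisors R] [CharZero R]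
    (h3 : 3 ≤ Fintype.card ι)
    (hM : ∀ Q : Matrix ι ι R, Qᵀ * Q = 1 → Q.det = 1 → Qᵀ * M * Q = M) :
    ∃ c : R, M = c • 1 := by
  obtain ⟨i⟩ : Nonempty ι := Fintype.card_pos_iff.mp (by omega)
  refine ⟨M i i, ext fun a b => ?_⟩
  rcases eq_or_ne a b with rfl | hab
  · simp [apply_self_eq_of_forall_SO_conj h3 hM a i]
  · simp [hab, apply_eq_zero_of_forall_SO_conj h3 hM hab]

end SOInvariant

end Matrix

/-- **A normalizer of `SO(n,ℝ)` is a similarity of the Euclidean inner product.**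
If `P ∈ GL(n,ℝ)` normalizes `SO(n,ℝ)` (`n ≥ 3`), i.e. `P⁻¹ SO(n) P = SO(n)`, then
conjugation by `P` preserves the standard inner product up to a positive scalar:
there is `c > 0` with `⟨Px, Py⟩ = c ⟨x, y⟩` for all `x, y ∈ ℝⁿ`. -/
theorem normalizer_SO_preserves_inner {n : ℕ} (hn : 3 ≤ n)
    (P : (Matrix (Fin n) (Fin n) ℝ)ˣ)
    (hnorm : ∀ Q : Matrix (Fin n) (Fin n) ℝ,
      (Qᵀ * Q = 1 ∧ Q.det = 1) ↔
      ((((P⁻¹).val * Q * P.val)ᵀ * ((P⁻¹).val * Q * P.val) = 1) ∧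
        ((P⁻¹).val * Q * P.val).det = 1)) :
    ∃ c : ℝ, 0 < c ∧ ∀ x y : Fin n → ℝ,
      (P.val.mulVec x) ⬝ᵥ (P.val.mulVec y) = c * (x ⬝ᵥ y) := by
  have hconj (Q : Matrix (Fin n) (Fin n) ℝ) :
      P⁻¹.val * (P.val * Q * P⁻¹.val) * P.val = Q := by
    simp [Matrix.mul_assoc]
  obtain ⟨c, hc⟩ := exists_eq_scalar_of_forall_SO_conj (by simpa using hn) fun Q hQ hdet =>
    transpose_mul_gram_mul_of_conj_orthogonal P
      ((hnorm _).mpr (by rw [hconj]; exact ⟨hQ, hdet⟩)).1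
  have hdot (x y : Fin n → ℝ) : P.val *ᵥ x ⬝ᵥ P.val *ᵥ y = c * (x ⬝ᵥ y) := by
    rw [mulVec_dotProduct_mulVec, hc, smul_mulVec, one_mulVec, dotProduct_smul, smul_eq_mul]
  refine ⟨c, ?_, hdot⟩
  set y := P⁻¹.val *ᵥ Pi.single (⟨0, by omega⟩ : Fin n) 1
  have hy : c * (y ⬝ᵥ y) = 1 := by
    rw [← hdot, mulVec_mulVec, P.mul_inv, one_mulVec]
    simp
  have hyy : 0 ≤ y ⬝ᵥ y := Finset.sum_nonneg fun k _ => mul_self_nonneg (y k)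
  exact pos_of_mul_pos_left (hy ▸ one_pos) hyy
end
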